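/- arXiv:1409.1454 — 2 statements merged into one kernel-verified Lean document; each statement's English description precedes it below -/
import Mathlib

section
/- For δ = 0, the Hessian of w₀ at the point e₁ = (1,0,0,0,0) is the diagonal matrix diag(2, −7, 2, 2, −7); in particular the multiset of eigenvalues of D²w₀(e₁) is {2, 2, 2, −7, −7}. -/
noncomputable section

open Matrix

/-- `E5` is Euclidean 5-space with coordinates `x = (x₁, x₂, z₁, z₂, z₃)`. -/
abbrev E5 := EuclideanSpace ℝ (Fin 5)

/-- Reinterpret a plain vector of `Fin 5 → ℝ` as a point of Euclidean space. -/
def toE5 (v : Fin 5 → ℝ) : E5 := (WithLp.equiv 2 (Fin 5 → ℝ)).symm v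

/-- The Cartan isoparametric cubic on ℝ⁵. -/
def CartanP (x : E5) : ℝ :=
  (x 0)^3 + (3 * x 0 / 2) * ((x 2)^2 + (x 3)^2 - 2*(x 4)^2 - 2*(x 1)^2)
    + (3 * Real.sqrt 3 / 2) * ((x 1) * (x 2)^2 - (x 1) * (x 3)^2 + 2 * x 2 * x 3 * x 4)

/-- The `i`-th standard coordinate vector of ℝ⁵. -/
def basisVec (i : Fin 5) : E5 := EuclideanSpace.single i 1

/-- The Hessian matrix of second partial derivatives of `f` at `x`. -/
def Hess (f : E5 → ℝ) (x : E5) : Matrix (Fin 5) (Fin 5) ℝ :=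
  fun i j => iteratedFDeriv ℝ 2 f x ![basisVec i, basisVec j]

/-- `wdel δ x = P(x)/|x|^{1+δ}` (equal to `0` at `x = 0`). -/
def wdel (δ : ℝ) (x : E5) : ℝ := CartanP x / ‖x‖ ^ (1 + δ)

/-! Write `P(x) = T(x, x, x)` for a trilinear form `T`, so that `w₀ = T(x, x, x) · ‖x‖⁻¹`. The
Leibniz rule for second derivatives, with `D²P(e₁) = diag(6, -6, 3, 3, -6)`, `∇P(e₁) = 3e₁`,
`P(e₁) = 1` and `D²‖·‖⁻¹(e₁) = 3e₁ ⊗ e₁ - I`, gives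
`D²w₀(e₁) = diag(6, -6, 3, 3, -6) - 6e₁ ⊗ e₁ + 3e₁ ⊗ e₁ - I = diag(2, -7, 2, 2, -7)`. -/

open ContinuousLinearMap
open scoped RealInnerProductSpace

section CubicForm

variable {𝕜 E F : Type*} [NontriviallyNormedField 𝕜] [NormedAddCommGroup E] [NormedSpace 𝕜 E]
  [NormedAddCommGroup F] [NormedSpace 𝕜 F]

theorem ContinuousLinearMap.hasFDerivAt_apply_self (B : E →L[𝕜] E →L[𝕜] F) (x : E) :
    HasFDerivAt (fun y => B y y) (B x + B.flip x) x :=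
  (B.hasFDerivAt.clm_apply (hasFDerivAt_id x)).congr_fderiv (by ext; simp)

theorem ContinuousLinearMap.hasFDerivAt_apply_self₃ (T : E →L[𝕜] E →L[𝕜] E →L[𝕜] F) (x : E) :
    HasFDerivAt (fun y => T y y y) (T x x + (T x).flip x + (T.flip x).flip x) x :=
  ((T.hasFDerivAt_apply_self x).clm_apply (hasFDerivAt_id x)).congr_fderiv (by
    ext
    simp only [comp_id, flip_add, id_eq, _root_.add_apply, flip_apply]
    abel)

theorem ContinuousLinearMap.fderiv_fderiv_apply_self₃ (T : E →L[𝕜] E →L[𝕜] E →L[𝕜] F)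
    (x v w : E) :
    fderiv 𝕜 (fderiv 𝕜 fun y => T y y y) x v w =
      T x v w + T v x w + T x w v + T v w x + T w x v + T w v x := by
  let flipL : (E →L[𝕜] E →L[𝕜] F) →L[𝕜] E →L[𝕜] E →L[𝕜] F := flipₗᵢ 𝕜 E E F
  have hD : fderiv 𝕜 (fun y => T y y y) =
      fun y => T y y + (flipL.comp T) y y + (flipL.comp T.flip) y y := by
    funext y
    rw [(T.hasFDerivAt_apply_self₃ y).fderiv]
    rfl
  rw [hD, (((T.hasFDerivAt_apply_self x).fun_add
    ((flipL.comp T).hasFDerivAt_apply_self x)).fun_add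
    ((flipL.comp T.flip).hasFDerivAt_apply_self x)).fderiv]
  simp only [comp_apply, ContinuousLinearEquiv.coe_coe,
    LinearIsometryEquiv.coe_toContinuousLinearEquiv, coe_flipₗᵢ, _root_.add_apply, flip_apply, flipL]
  abel

end CubicForm

section NormRpow

variable {E : Type*} [NormedAddCommGroup E] [InnerProductSpace ℝ E]

theorem hasFDerivAt_norm_rpow_of_ne_zero {x : E} (hx : x ≠ 0) (p : ℝ) :
    HasFDerivAt (fun y : E => ‖y‖ ^ p) ((p * ‖x‖ ^ (p - 2)) • innerSL ℝ x) x := by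
  have hsq (y : E) : (‖y‖ ^ 2) ^ (p / 2) = ‖y‖ ^ p := by
    rw [← Real.rpow_natCast_mul (norm_nonneg y)]
    ring_nf
  have h := (hasStrictFDerivAt_norm_sq x).hasFDerivAt.rpow_const (p := p / 2)
    (Or.inl (by simpa using hx))
  simp only [hsq] at h
  refine h.congr_fderiv ?_
  rw [show p / 2 - 1 = (p - 2) / 2 by ring, ← Real.rpow_natCast_mul (norm_nonneg x)]
  ext v
  simp only [Nat.cast_ofNat, _root_.smul_apply, coe_innerSL_apply, nsmul_eq_mul, smul_eq_mul]
  ring_nf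

theorem fderiv_fderiv_norm_rpow_apply {x : E} (hx : x ≠ 0) (p : ℝ) (v w : E) :
    fderiv ℝ (fderiv ℝ fun y : E => ‖y‖ ^ p) x v w =
      p * ‖x‖ ^ (p - 2) * ⟪v, w⟫ + p * (p - 2) * ‖x‖ ^ (p - 4) * ⟪x, v⟫ * ⟪x, w⟫ := by
  have hD : fderiv ℝ (fun y : E => ‖y‖ ^ p) =ᶠ[nhds x]
      fun y => (p * ‖y‖ ^ (p - 2)) • innerSL ℝ y := by
    filter_upwards [isOpen_ne.mem_nhds hx] with y hy
    exact (hasFDerivAt_norm_rpow_of_ne_zero hy p).fderiv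
  have h := ((hasFDerivAt_norm_rpow_of_ne_zero hx (p - 2)).const_mul p).fun_smul
    (innerSL ℝ).hasFDerivAt
  rw [hD.fderiv_eq, h.fderiv]
  simp only [_root_.add_apply, _root_.smul_apply, smulRight_apply, coe_innerSL_apply,
    smul_eq_mul]
  rw [innerSL_apply_apply, innerSL_apply_apply, show p - 2 - 2 = p - 4 by ring]
  ring

end NormRpow

theorem fderiv_fderiv_mul_apply {E : Type*} [NormedAddCommGroup E] [NormedSpace ℝ E]
    {f g : E → ℝ} {x : E} (hf : ContDiffAt ℝ 2 f x) (hg : ContDiffAt ℝ 2 g x) (v w : E) :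
    fderiv ℝ (fderiv ℝ fun y => f y * g y) x v w =
      f x * fderiv ℝ (fderiv ℝ g) x v w + fderiv ℝ f x v * fderiv ℝ g x w +
        fderiv ℝ g x v * fderiv ℝ f x w + g x * fderiv ℝ (fderiv ℝ f) x v w := by
  have hD : fderiv ℝ (fun y => f y * g y) =ᶠ[nhds x]
      fun y => f y • fderiv ℝ g y + g y • fderiv ℝ f y := by
    filter_upwards [hf.eventually (by simp), hg.eventually (by simp)] with y hfy hgy
    exact fderiv_mul (hfy.differentiableAt (by simp)) (hgy.differentiableAt (by simp))
  have hf1 := (hf.differentiableAt two_ne_zero).hasFDerivAt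
  have hg1 := (hg.differentiableAt two_ne_zero).hasFDerivAt
  have hf2 := ((hf.fderiv_right (m := 1) le_rfl).differentiableAt one_ne_zero).hasFDerivAt
  have hg2 := ((hg.fderiv_right (m := 1) le_rfl).differentiableAt one_ne_zero).hasFDerivAt
  rw [hD.fderiv_eq, ((hf1.fun_smul hg2).fun_add (hg1.fun_smul hf2)).fderiv]
  simp only [_root_.add_apply, _root_.smul_apply, smulRight_apply, smul_eq_mul]
  ring

theorem Matrix.roots_charpoly_diagonal {n R : Type*} [Fintype n] [DecidableEq n] [CommRing R]
    [IsDomain R] (d : n → R) :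
    (diagonal d).charpoly.roots = Finset.univ.val.map d := by
  rw [charpoly_diagonal, Finset.prod_eq_multiset_prod,
    ← Polynomial.roots_multiset_prod_X_sub_C (Finset.univ.val.map d), Multiset.map_map]
  rfl

def coordProd {n : ℕ} (j k : Fin n) :
    EuclideanSpace ℝ (Fin n) →L[ℝ] EuclideanSpace ℝ (Fin n) →L[ℝ] ℝ :=
  (EuclideanSpace.proj j).smulRight (EuclideanSpace.proj k)

@[simp]
theorem coordProd_apply {n : ℕ} (j k : Fin n) (x y : EuclideanSpace ℝ (Fin n)) :
    coordProd j k x y = x j * y k :=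
  rfl

/-- Assembled with `constrL` from the quadratic forms `Qᵢ` of `P(x) = ∑ᵢ xᵢ Qᵢ(x, x)`: instance
search does not find `Add` on `E5 →L[ℝ] E5 →L[ℝ] E5 →L[ℝ] ℝ`, so `cartanForm` cannot be written as a
sum of trilinear monomials. -/
def cartanForm : E5 →L[ℝ] E5 →L[ℝ] E5 →L[ℝ] ℝ :=
  (EuclideanSpace.basisFun (Fin 5) ℝ).toBasis.constrL
    ![coordProd 0 0 + (3 / 2 : ℝ) • (coordProd 2 2 + coordProd 3 3 - 2 • coordProd 4 4 -
        2 • coordProd 1 1),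
      (3 * √3 / 2) • (coordProd 2 2 - coordProd 3 3),
      (3 * √3) • coordProd 3 4, 0, 0]

theorem cartanForm_apply (x y z : E5) :
    cartanForm x y z =
      x 0 * (y 0 * z 0 + 3 / 2 * (y 2 * z 2 + y 3 * z 3 - 2 * (y 4 * z 4) - 2 * (y 1 * z 1))) +
        x 1 * (3 * √3 / 2 * (y 2 * z 2 - y 3 * z 3)) + x 2 * (3 * √3 * (y 3 * z 4)) := by
  simp [cartanForm, Fin.sum_univ_five, mul_add]

theorem cartanP_eq_cartanForm (x : E5) : CartanP x = cartanForm x x x := by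
  rw [CartanP, cartanForm_apply]
  ring

theorem wdel_zero_eq : wdel 0 = fun x => cartanForm x x x * ‖x‖ ^ (-1 : ℝ) := by
  funext x
  simp [wdel, cartanP_eq_cartanForm, Real.rpow_neg_one, div_eq_mul_inv]

theorem toE5_eq_basisVec_zero : toE5 ![1, 0, 0, 0, 0] = basisVec 0 := by
  ext i
  fin_cases i <;> simp [toE5, basisVec]

theorem fderiv_fderiv_wdel_zero_basisVec_zero (v w : E5) :
    fderiv ℝ (fderiv ℝ (wdel 0)) (basisVec 0) v w = ∑ k, ![2, -7, 2, 2, -7] k * v k * w k := by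
  have he : basisVec 0 ≠ 0 := by simp [basisVec]
  have hcubic : ContDiffAt ℝ 2 (fun x => cartanForm x x x) (basisVec 0) := by fun_prop
  have hnorm : ContDiffAt ℝ 2 (fun x : E5 => ‖x‖ ^ (-1 : ℝ)) (basisVec 0) :=
    (contDiffAt_norm ℝ he).rpow_const_of_ne (norm_ne_zero_iff.2 he)
  rw [wdel_zero_eq, fderiv_fderiv_mul_apply hcubic hnorm, fderiv_fderiv_norm_rpow_apply he,
    cartanForm.fderiv_fderiv_apply_self₃, (cartanForm.hasFDerivAt_apply_self₃ _).fderiv,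
    (hasFDerivAt_norm_rpow_of_ne_zero he _).fderiv]
  simp [cartanForm_apply, basisVec, Fin.sum_univ_five, PiLp.inner_apply]
  ring

theorem hess_wdel_zero_basisVec_zero :
    Hess (wdel 0) (basisVec 0) = diagonal ![2, -7, 2, 2, -7] := by
  ext i j
  rw [Hess, iteratedFDeriv_two_apply, cons_val_zero, cons_val_one, cons_val_zero,
    fderiv_fderiv_wdel_zero_basisVec_zero]
  rcases eq_or_ne i j with rfl | hij
  · simp [basisVec]
  · simp [basisVec, hij, hij.symm]

/-- For `δ = 0`, the Hessian of `w₀` at `e₁ = (1,0,0,0,0)` is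
`diag(2, −7, 2, 2, −7)`; in particular its multiset of eigenvalues is
`{2, 2, 2, −7, −7}`. -/
theorem hessian_w0_at_e1 :
    Hess (wdel 0) (toE5 ![1, 0, 0, 0, 0]) = Matrix.diagonal ![2, -7, 2, 2, -7] ∧
    (Hess (wdel 0) (toE5 ![1, 0, 0, 0, 0])).charpoly.roots =
      ({2, 2, 2, -7, -7} : Multiset ℝ) := by
  rw [toE5_eq_basisVec_zero, hess_wdel_zero_basisVec_zero, roots_charpoly_diagonal]
  refine ⟨rfl, ?_⟩
  simp only [Fin.univ_val_map, List.ofFn_succ, List.ofFn_zero]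
  exact Multiset.coe_eq_coe.2 (.cons _ ((List.Perm.swap _ _ _).trans (.cons _ (.swap _ _ _))))
end
end

section
/- Let δ = 1/2 and for p ∈ [−1,1] let x_p := (p, 0, √(1−p²), 0, 0). For s, t ∈ (0,1], p, q ∈ [−1,1], set a := s·x_p, b := t·x_q and K := |s−t| + |p−q|. Then | |∇w_{1/2}(a)|² − |∇w_{1/2}(b)|² | ≤ 16·K. -/
noncomputable section

open Matrix

/-- `w_{1/2}(x) = P(x)/|x|^{3/2}` (equal to `0` at `x = 0`). -/
def whalf (x : E5) : ℝ := CartanP x / ‖x‖ ^ (3/2 : ℝ)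

/-- The point `x_p = (p, 0, √(1−p²), 0, 0)` of the unit sphere. -/
def spherePt (p : ℝ) : E5 := toE5 ![p, 0, Real.sqrt (1 - p^2), 0, 0]

/-!
Since `P` is a homogeneous cubic with `⟪∇P x, x⟫ = 3 P x` and `|∇P x|² = 9 |x|⁴`, the
gradient of `w = P / |x|^{3/2}` satisfies `|∇w x|² = 9 |x| - (27/4) P(x)² / |x|⁵`. As
`P(x_p) = (3p - p³)/2`, on the ray `s • x_p` this is `9 s - (27/16) s (3p - p³)²`. The bound
then follows from `0 ≤ (3p - p³)² ≤ 4` and the fact that `p ↦ (3p - p³)²` is `9`-Lipschitz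
on `[-1, 1]`.
-/

open Set RealInnerProductSpace

section RadialQuotient

variable {E : Type*} [NormedAddCommGroup E] [InnerProductSpace ℝ E] [CompleteSpace E]
  {f : E → ℝ} {g x : E}

theorem Real.sq_rpow_div_two {a : ℝ} (ha : 0 ≤ a) (r : ℝ) : (a ^ 2) ^ (r / 2) = a ^ r := by
  rw [← Real.rpow_natCast, ← Real.rpow_mul ha]
  push_cast
  ring_nf

theorem HasGradientAt.div_norm_rpow (hf : HasGradientAt f g x) (hx : x ≠ 0) (r : ℝ) :
    HasGradientAt (fun y => f y / ‖y‖ ^ r)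
      (‖x‖ ^ (-r) • g - (r * f x * ‖x‖ ^ (-r - 2)) • x) x := by
  have hfun : (fun y => f y / ‖y‖ ^ r) = fun y => f y * (‖y‖ ^ 2) ^ (-r / 2) := by
    funext y
    rw [Real.sq_rpow_div_two (norm_nonneg y), Real.rpow_neg (norm_nonneg y), div_eq_mul_inv]
  rw [hfun, hasGradientAt_iff_hasFDerivAt]
  refine (hf.hasFDerivAt.mul ((hasStrictFDerivAt_norm_sq x).hasFDerivAt.rpow_const
    (Or.inl (by positivity)))).congr_fderiv ?_
  have hexp : -r / 2 - 1 = (-r - 2) / 2 := by ring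
  ext y
  simp only [hexp, Real.sq_rpow_div_two (norm_nonneg x), _root_.add_apply, _root_.smul_apply,
    coe_innerSL_apply, nsmul_eq_mul, Nat.cast_ofNat, smul_eq_mul,
    InnerProductSpace.toDual_apply_apply, map_sub, map_smul, _root_.sub_apply]
  ring

theorem norm_sq_gradient_div_norm_rpow (hf : HasGradientAt f g x) (hx : x ≠ 0) {r k : ℝ}
    (heuler : ⟪g, x⟫ = k * f x) :
    ‖gradient (fun y => f y / ‖y‖ ^ r) x‖ ^ 2
      = ‖x‖ ^ (-2 * r) * (‖g‖ ^ 2 + r * (r - 2 * k) * f x ^ 2 / ‖x‖ ^ 2) := by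
  have hx' : 0 < ‖x‖ := norm_pos_iff.2 hx
  have hsub : ‖x‖ ^ (-r - 2) = ‖x‖ ^ (-r) / ‖x‖ ^ 2 := by
    rw [Real.rpow_sub hx', Real.rpow_two]
  have hsq : ‖x‖ ^ (-2 * r) = (‖x‖ ^ (-r)) ^ 2 := by
    rw [← Real.rpow_natCast, ← Real.rpow_mul hx'.le]
    push_cast
    ring_nf
  rw [(hf.div_norm_rpow hx r).gradient, norm_sub_sq_real, norm_smul, norm_smul,
    real_inner_smul_left, real_inner_smul_right, heuler, hsub, hsq]
  simp only [Real.norm_eq_abs, mul_pow, sq_abs]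
  field_simp
  ring

end RadialQuotient

theorem toE5_apply (v : Fin 5 → ℝ) (i : Fin 5) : toE5 v i = v i := rfl

theorem E5.inner_eq (x y : E5) :
    ⟪x, y⟫ = x 0 * y 0 + x 1 * y 1 + x 2 * y 2 + x 3 * y 3 + x 4 * y 4 := by
  simp only [PiLp.inner_apply, RCLike.inner_apply, conj_trivial, Fin.sum_univ_five]
  ring

theorem E5.norm_sq_eq (x : E5) :
    ‖x‖ ^ 2 = x 0 ^ 2 + x 1 ^ 2 + x 2 ^ 2 + x 3 ^ 2 + x 4 ^ 2 := by
  rw [← real_inner_self_eq_norm_sq, E5.inner_eq]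
  ring

def gradCartanP (x : E5) : E5 := toE5 ![
  3 * x 0 ^ 2 + 3 / 2 * (x 2 ^ 2 + x 3 ^ 2 - 2 * x 4 ^ 2 - 2 * x 1 ^ 2),
  -6 * x 0 * x 1 + 3 * √3 / 2 * (x 2 ^ 2 - x 3 ^ 2),
  3 * x 0 * x 2 + 3 * √3 * (x 1 * x 2 + x 3 * x 4),
  3 * x 0 * x 3 + 3 * √3 * (x 2 * x 4 - x 1 * x 3),
  -6 * x 0 * x 4 + 3 * √3 * x 2 * x 3]

theorem hasGradientAt_CartanP (x : E5) : HasGradientAt CartanP (gradCartanP x) x := by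
  have h : ∀ i : Fin 5, HasFDerivAt (fun y : E5 => y i) (EuclideanSpace.proj (𝕜 := ℝ) i) x :=
    fun i => (EuclideanSpace.proj (𝕜 := ℝ) i).hasFDerivAt
  have H := (((h 0).mul (h 0)).mul (h 0)).add
      (((h 0).const_mul (3 / 2 : ℝ)).mul
        (((((h 2).mul (h 2)).add ((h 3).mul (h 3))).sub (((h 4).mul (h 4)).const_mul 2)).sub
          (((h 1).mul (h 1)).const_mul 2))) |>.add
      (((((h 1).mul ((h 2).mul (h 2))).sub ((h 1).mul ((h 3).mul (h 3)))).add
        ((((h 2).const_mul 2).mul (h 3)).mul (h 4))).const_mul (3 * √3 / 2))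
  rw [hasGradientAt_iff_hasFDerivAt]
  refine (H.congr_of_eventuallyEq (.of_forall fun y => ?_)).congr_fderiv ?_
  · simp only [CartanP, Pi.mul_apply, Pi.add_apply, Pi.sub_apply]
    ring
  ext y
  simp only [Pi.mul_apply, smul_add, Pi.sub_apply, Pi.add_apply, _root_.add_apply,
    _root_.smul_apply, PiLp.proj_apply, smul_eq_mul, _root_.sub_apply,
    InnerProductSpace.toDual_apply_apply, E5.inner_eq, gradCartanP, toE5_apply, Matrix.cons_val]
  ring

theorem inner_gradCartanP_self (x : E5) : ⟪gradCartanP x, x⟫ = 3 * CartanP x := by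
  simp only [E5.inner_eq, gradCartanP, toE5_apply, CartanP, Matrix.cons_val]
  ring

/-- The first Cartan–Münzner equation of the isoparametric cubic. -/
theorem norm_sq_gradCartanP (x : E5) : ‖gradCartanP x‖ ^ 2 = 9 * ‖x‖ ^ 4 := by
  have h3 : √3 ^ 2 = 3 := Real.sq_sqrt (by norm_num)
  rw [show ‖x‖ ^ 4 = (‖x‖ ^ 2) ^ 2 by ring, E5.norm_sq_eq, E5.norm_sq_eq]
  simp only [gradCartanP, toE5_apply, Matrix.cons_val]
  -- the coefficient collects the terms of `‖∇P‖²` carrying `√3 ^ 2`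
  linear_combination (9 / 4 * (x 2 ^ 2 - x 3 ^ 2) ^ 2 + 9 * (x 1 * x 2 + x 3 * x 4) ^ 2
    + 9 * (x 2 * x 4 - x 1 * x 3) ^ 2 + 9 * x 2 ^ 2 * x 3 ^ 2) * h3

theorem CartanP_smul (s : ℝ) (x : E5) : CartanP (s • x) = s ^ 3 * CartanP x := by
  simp only [CartanP, PiLp.smul_apply, smul_eq_mul]
  ring

theorem norm_sq_gradient_whalf {x : E5} (hx : x ≠ 0) :
    ‖gradient whalf x‖ ^ 2 = 9 * ‖x‖ - 27 / 4 * CartanP x ^ 2 / ‖x‖ ^ 5 := by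
  have hx' : 0 < ‖x‖ := norm_pos_iff.2 hx
  have h := norm_sq_gradient_div_norm_rpow (hasGradientAt_CartanP x) hx (r := 3 / 2)
    (inner_gradCartanP_self x)
  rw [norm_sq_gradCartanP, show -2 * (3 / 2 : ℝ) = -(3 : ℕ) by norm_num,
    Real.rpow_neg hx'.le, Real.rpow_natCast] at h
  have hw : whalf = fun y => CartanP y / ‖y‖ ^ (3 / 2 : ℝ) := rfl
  rw [hw, h]
  field_simp
  ring

theorem norm_spherePt {p : ℝ} (hp : p ∈ Icc (-1 : ℝ) 1) : ‖spherePt p‖ = 1 := by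
  have hp2 : p ^ 2 ≤ 1 := (sq_le_one_iff_abs_le_one p).2 (abs_le.2 hp)
  rw [← pow_eq_one_iff_of_nonneg (norm_nonneg _) two_ne_zero, E5.norm_sq_eq]
  simp only [spherePt, toE5_apply, Matrix.cons_val]
  rw [Real.sq_sqrt (by linarith)]
  ring

theorem CartanP_spherePt {p : ℝ} (hp : p ∈ Icc (-1 : ℝ) 1) :
    CartanP (spherePt p) = (3 * p - p ^ 3) / 2 := by
  have hp2 : p ^ 2 ≤ 1 := (sq_le_one_iff_abs_le_one p).2 (abs_le.2 hp)
  simp only [CartanP, spherePt, toE5_apply, Matrix.cons_val]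
  rw [Real.sq_sqrt (by linarith)]
  ring

theorem norm_sq_gradient_whalf_smul_spherePt {s p : ℝ} (hs : 0 < s)
    (hp : p ∈ Icc (-1 : ℝ) 1) :
    ‖gradient whalf (s • spherePt p)‖ ^ 2 = 9 * s - 27 / 16 * s * (3 * p - p ^ 3) ^ 2 := by
  have hnorm : ‖s • spherePt p‖ = s := by
    rw [norm_smul, norm_spherePt hp, Real.norm_of_nonneg hs.le, mul_one]
  rw [norm_sq_gradient_whalf (by rw [← norm_ne_zero_iff, hnorm]; exact hs.ne'), hnorm,
    CartanP_smul, CartanP_spherePt hp]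
  field_simp
  ring

theorem hasDerivAt_sq_three_mul_sub_cube (x : ℝ) :
    HasDerivAt (fun x : ℝ => (3 * x - x ^ 3) ^ 2) (6 * x * (3 - x ^ 2) * (1 - x ^ 2)) x := by
  refine ((hasDerivAt_pow 2 _).comp x
    (((hasDerivAt_id' x).const_mul 3).sub (hasDerivAt_pow 3 x))).congr_deriv ?_
  simp only [Pi.sub_apply, Nat.cast_ofNat]
  ring

theorem abs_sq_three_mul_sub_cube_sub_le {p q : ℝ} (hp : p ∈ Icc (-1 : ℝ) 1)
    (hq : q ∈ Icc (-1 : ℝ) 1) :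
    |(3 * q - q ^ 3) ^ 2 - (3 * p - p ^ 3) ^ 2| ≤ 9 * |q - p| := by
  have hbound : ∀ x ∈ Icc (-1 : ℝ) 1, ‖6 * x * (3 - x ^ 2) * (1 - x ^ 2)‖ ≤ 9 := by
    intro x hx
    have h1 : 0 ≤ 1 - x ^ 2 := sub_nonneg.2 ((sq_le_one_iff_abs_le_one x).2 (abs_le.2 hx))
    have hcubic : |x| * (1 - x ^ 2) ≤ 1 / 2 := by
      rw [← sq_abs x]
      nlinarith [mul_nonneg (sq_nonneg (|x| - 1 / 2)) (by positivity : 0 ≤ |x| + 1)]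
    rw [Real.norm_eq_abs,
      show 6 * x * (3 - x ^ 2) * (1 - x ^ 2) = 6 * (x * (1 - x ^ 2)) * (3 - x ^ 2) by ring,
      abs_mul, abs_mul, abs_mul x, abs_of_nonneg h1,
      abs_of_nonneg (by linarith : (0 : ℝ) ≤ 3 - x ^ 2),
      abs_of_pos (by norm_num : (0 : ℝ) < 6)]
    nlinarith [mul_le_mul_of_nonneg_right hcubic (by linarith : (0 : ℝ) ≤ 3 - x ^ 2)]
  simpa only [Real.norm_eq_abs] using
    (convex_Icc (-1 : ℝ) 1).norm_image_sub_le_of_norm_hasDerivWithin_le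
      (fun x _ => (hasDerivAt_sq_three_mul_sub_cube x).hasDerivWithinAt) hbound hp hq

theorem sq_three_mul_sub_cube_le_four {p : ℝ} (hp : p ∈ Icc (-1 : ℝ) 1) :
    (3 * p - p ^ 3) ^ 2 ≤ 4 := by
  have hp2 : p ^ 2 ≤ 1 := (sq_le_one_iff_abs_le_one p).2 (abs_le.2 hp)
  nlinarith [mul_nonneg (sq_nonneg (1 - p ^ 2)) (by linarith : (0 : ℝ) ≤ 4 - p ^ 2)]

/-- Lemma 3.3: with `a = s·x_p`, `b = t·x_q` and `K = |s−t| + |p−q|`, the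
squared gradient norms of `w_{1/2}` differ by at most `16K`. -/
theorem gradient_norm_sq_difference_bound
    (s t : ℝ) (hs : s ∈ Set.Ioc (0:ℝ) 1) (ht : t ∈ Set.Ioc (0:ℝ) 1)
    (p q : ℝ) (hp : p ∈ Set.Icc (-1:ℝ) 1) (hq : q ∈ Set.Icc (-1:ℝ) 1) :
    |‖gradient whalf (s • spherePt p)‖^2 - ‖gradient whalf (t • spherePt q)‖^2| ≤
      16 * (|s - t| + |p - q|) := by
  rw [norm_sq_gradient_whalf_smul_spherePt hs.1 hp, norm_sq_gradient_whalf_smul_spherePt ht.1 hq]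
  set A := (3 * p - p ^ 3) ^ 2
  set B := (3 * q - q ^ 3) ^ 2
  have hA : |9 - 27 / 16 * A| ≤ 9 :=
    abs_le.2 ⟨by linarith [sq_three_mul_sub_cube_le_four hp],
      by linarith [sq_nonneg (3 * p - p ^ 3)]⟩
  have hAB : |B - A| ≤ 9 * |p - q| := abs_sub_comm q p ▸ abs_sq_three_mul_sub_cube_sub_le hp hq
  calc |(9 * s - 27 / 16 * s * A) - (9 * t - 27 / 16 * t * B)|
      = |(s - t) * (9 - 27 / 16 * A) + 27 / 16 * t * (B - A)| := by ring_nf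
    _ ≤ |(s - t) * (9 - 27 / 16 * A)| + |27 / 16 * t * (B - A)| := abs_add_le _ _
    _ = |s - t| * |9 - 27 / 16 * A| + 27 / 16 * t * |B - A| := by
      rw [abs_mul, abs_mul, abs_mul, abs_of_pos (by norm_num : (0 : ℝ) < 27 / 16),
        abs_of_pos ht.1]
    _ ≤ |s - t| * 9 + 27 / 16 * 1 * (9 * |p - q|) := by
      gcongr
      exact ht.2
    _ ≤ 16 * (|s - t| + |p - q|) := by linarith [abs_nonneg (s - t), abs_nonneg (p - q)]
end
end
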